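/- arXiv:quant-ph/0610146 — 5 statements merged into one kernel-verified Lean document; each statement's English description precedes it below -/
import Mathlib

section
/- For any two probability vectors p, q of dimension d ≥ 2, with T = (1/2)·Σᵢ |pᵢ − qᵢ|, the Shannon entropies satisfy |H(p) − H(q)| ≤ T·log₂(d−1) − T log₂ T − (1−T) log₂(1−T). -/
/-- Scalar entropy contribution `H(x) = -x log₂ x` (with `0 log₂ 0 = 0`,
which holds since `Real.logb 2 0 = 0`). -/
noncomputable def Hbit (x : ℝ) : ℝ := -(x * Real.logb 2 x)

/-- Pointwise Gibbs-type bound. -/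
lemma pointwise_bound (w p q t : ℝ) (hw0 : 0 ≤ w) (hwp : w ≤ p) (hwq : w ≤ q)
    (ht0 : 0 ≤ t) (hz : t * q = 0 → w = 0) :
    w * (Real.log q - Real.log p) ≤ (q * t - w) - w * Real.log t := by
  rcases hw0.eq_or_lt with h | hw
  · rw [← h]
    have hq : 0 ≤ q := le_trans h.le hwq
    simp only [zero_mul, sub_zero]
    nlinarith [mul_nonneg hq ht0]
  · have hp : 0 < p := lt_of_lt_of_le hw hwp
    have hq : 0 < q := lt_of_lt_of_le hw hwq
    have ht : 0 < t := by
      rcases ht0.eq_or_lt with h0 | h0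
      · exfalso
        have : w = 0 := hz (by rw [← h0]; ring)
        exact absurd this hw.ne'
      · exact h0
    have hid : Real.log q - Real.log p =
        Real.log (q * t / w) + Real.log (w / p) - Real.log t := by
      rw [Real.log_div (by positivity) hw.ne', Real.log_mul hq.ne' ht.ne',
        Real.log_div hw.ne' hp.ne']
      ring
    have h1 : w * Real.log (q * t / w) ≤ q * t - w := by
      have hl := Real.log_le_sub_one_of_pos (x := q * t / w) (by positivity)
      have h2 := mul_le_mul_of_nonneg_left hl hw0
      calc w * Real.log (q * t / w) ≤ w * (q * t / w - 1) := h2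
        _ = q * t - w := by field_simp
    have h2 : w * Real.log (w / p) ≤ 0 := by
      have : Real.log (w / p) ≤ 0 :=
        Real.log_nonpos (by positivity) ((div_le_one hp).mpr hwp)
      exact mul_nonpos_of_nonneg_of_nonpos hw0 this
    calc w * (Real.log q - Real.log p)
        = w * Real.log (q * t / w) + w * Real.log (w / p) - w * Real.log t := by
          rw [hid]; ring
      _ ≤ (q * t - w) - w * Real.log t := by linarith

theorem key_ineq (d : ℕ) (hd : 2 ≤ d) (p q : Fin d → ℝ)
    (hp0 : ∀ i, 0 ≤ p i) (hq0 : ∀ i, 0 ≤ q i)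
    (hp1 : ∑ i, p i = 1) (hq1 : ∑ i, q i = 1)
    (T : ℝ) (hT : T = (∑ i, |p i - q i|) / 2) :
    (-∑ i, p i * Real.log (p i)) - (-∑ i, q i * Real.log (q i)) ≤
      T * Real.log ((d : ℝ) - 1) - T * Real.log T - (1 - T) * Real.log (1 - T) := by
  have hd1 : (0:ℝ) < (d : ℝ) - 1 := by
    have : (2:ℝ) ≤ (d : ℝ) := by exact_mod_cast hd
    linarith
  have hT0 : 0 ≤ T := by
    rw [hT]
    positivity
  rcases hT0.eq_or_lt with hTz | hTpos
  · -- T = 0 : p = q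
    have hpq : ∀ i, p i = q i := by
      have hsum : ∑ i, |p i - q i| = 0 := by
        rw [hT] at hTz; linarith
      intro i
      have h1 := (Finset.sum_eq_zero_iff_of_nonneg (fun i _ => abs_nonneg (p i - q i))).mp
        hsum i (Finset.mem_univ i)
      have := abs_eq_zero.mp h1
      linarith
    have : ∀ i, p i * Real.log (p i) = q i * Real.log (q i) := fun i => by rw [hpq i]
    rw [Finset.sum_congr rfl fun i _ => this i, ← hTz]
    simp
  -- main case T > 0
  set m : Fin d → ℝ := fun i => min (p i) (q i) with hm
  have hm0 : ∀ i, 0 ≤ m i := fun i => le_min (hp0 i) (hq0 i)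
  have hmp : ∀ i, m i ≤ p i := fun i => min_le_left _ _
  have hmq : ∀ i, m i ≤ q i := fun i => min_le_right _ _
  have habs : ∀ i, |p i - q i| = p i + q i - 2 * m i := by
    intro i; rcases le_total (p i) (q i) with h | h
    · rw [abs_of_nonpos (by linarith), show m i = p i from min_eq_left h]
      try ring
    · rw [abs_of_nonneg (by linarith), show m i = q i from min_eq_right h]
      try ring
  have hS : T = 1 - ∑ i, m i := by
    rw [hT]
    rw [Finset.sum_congr rfl fun i _ => habs i]
    rw [Finset.sum_sub_distrib, Finset.sum_add_distrib, hp1, hq1, ← Finset.mul_sum]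
    ring
  have hSm0 : 0 ≤ ∑ i, m i := Finset.sum_nonneg fun i _ => hm0 i
  have hT1 : T ≤ 1 := by rw [hS]; linarith
  have hTp : ∑ i, (p i - m i) = T := by
    rw [Finset.sum_sub_distrib, hp1, hS]
  have hTq : ∑ i, (q i - m i) = T := by
    rw [Finset.sum_sub_distrib, hq1, hS]
  set w : Fin d → Fin d → ℝ :=
    fun i j => (if i = j then m i else 0) + (p i - m i) / T * (q j - m j) with hwdef
  have hw0 : ∀ i j, 0 ≤ w i j := by
    intro i j
    have h1 : 0 ≤ (p i - m i) / T * (q j - m j) :=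
      mul_nonneg (div_nonneg (by linarith [hmp i]) hT0) (by linarith [hmq j])
    have h2 : (0:ℝ) ≤ if i = j then m i else 0 := by
      by_cases h : i = j
      · simpa [h] using hm0 j
      · simp [h]
    exact add_nonneg h2 h1
  have hrow : ∀ i, ∑ j, w i j = p i := by
    intro i
    show ∑ j, ((if i = j then m i else 0) + (p i - m i) / T * (q j - m j)) = p i
    rw [Finset.sum_add_distrib, Finset.sum_ite_eq, ← Finset.mul_sum, hTq]
    simp only [Finset.mem_univ, if_true]
    rw [div_mul_cancel₀ _ hTpos.ne']
    ring
  have hcol : ∀ j, ∑ i, w i j = q j := by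
    intro j
    show ∑ i, ((if i = j then m i else 0) + (p i - m i) / T * (q j - m j)) = q j
    rw [Finset.sum_add_distrib, Finset.sum_ite_eq', ← Finset.sum_mul]
    have : ∑ i, (p i - m i) / T = 1 := by
      rw [← Finset.sum_div, hTp, div_self hTpos.ne']
    rw [this]
    simp only [Finset.mem_univ, if_true]
    ring
  have hwp : ∀ i j, w i j ≤ p i := by
    intro i j
    rw [← hrow i]
    exact Finset.single_le_sum (fun k _ => hw0 i k) (Finset.mem_univ j)
  have hwq : ∀ i j, w i j ≤ q j := by
    intro i j
    rw [← hcol j]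
    exact Finset.single_le_sum (fun k _ => hw0 k j) (Finset.mem_univ i)
  have hdiag : ∀ i, w i i = m i := by
    intro i
    show (if i = i then m i else 0) + (p i - m i) / T * (q i - m i) = m i
    rcases min_cases (p i) (q i) with ⟨h1, _⟩ | ⟨h1, _⟩
    · have : p i - m i = 0 := by simp [hm, h1]
      simp [this]
    · have : q i - m i = 0 := by simp [hm, h1]
      simp [this]
  have hdiagsum : ∑ i, w i i = 1 - T := by
    rw [Finset.sum_congr rfl fun i _ => hdiag i]
    linarith [hS]
  -- the template t
  set t : Fin d → Fin d → ℝ :=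
    fun i j => if i = j then 1 - T else T / ((d : ℝ) - 1) with htdef
  have ht0 : ∀ i j, 0 ≤ t i j := by
    intro i j
    by_cases h : i = j <;> simp [htdef, h]
    · linarith
    · positivity
  have hz : ∀ i j, t i j * q j = 0 → w i j = 0 := by
    intro i j h
    rcases mul_eq_zero.mp h with h | h
    · by_cases hij : i = j
      · subst hij
        rw [htdef] at h
        simp only [if_true] at h
        have hm_all : ∑ k, m k = 0 := by linarith [hS]
        have : m i = 0 :=
          (Finset.sum_eq_zero_iff_of_nonneg (fun k _ => hm0 k)).mp hm_all i (Finset.mem_univ i)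
        rw [hdiag i, this]
      · rw [htdef] at h
        simp only [hij, if_false] at h
        exfalso
        have : T / ((d : ℝ) - 1) > 0 := by positivity
        linarith
    · exact le_antisymm (h ▸ hwq i j) (hw0 i j)
  -- Step 1: rewrite entropy difference as a double sum
  have hA : (-∑ i, p i * Real.log (p i)) - (-∑ i, q i * Real.log (q i)) =
      ∑ i, ∑ j, w i j * (Real.log (q j) - Real.log (p i)) := by
    have h1 : ∑ i, ∑ j, w i j * Real.log (p i) = ∑ i, p i * Real.log (p i) := by
      refine Finset.sum_congr rfl fun i _ => ?_
      rw [← Finset.sum_mul, hrow i]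
    have h2 : ∑ i, ∑ j, w i j * Real.log (q j) = ∑ j, q j * Real.log (q j) := by
      rw [Finset.sum_comm]
      refine Finset.sum_congr rfl fun j _ => ?_
      rw [← Finset.sum_mul, hcol j]
    have h3 : ∑ i, ∑ j, w i j * (Real.log (q j) - Real.log (p i)) =
        (∑ i, ∑ j, w i j * Real.log (q j)) - ∑ i, ∑ j, w i j * Real.log (p i) := by
      rw [← Finset.sum_sub_distrib]
      refine Finset.sum_congr rfl fun i _ => ?_
      rw [← Finset.sum_sub_distrib]
      refine Finset.sum_congr rfl fun j _ => ?_
      ring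
    rw [h3, h1, h2]
    ring
  -- Step 2: pointwise bound and summation
  have hstep : ∑ i, ∑ j, w i j * (Real.log (q j) - Real.log (p i)) ≤
      (∑ i, ∑ j, (q j * t i j - w i j)) - ∑ i, ∑ j, w i j * Real.log (t i j) := by
    have := fun i j => pointwise_bound (w i j) (p i) (q j) (t i j)
      (hw0 i j) (hwp i j) (hwq i j) (ht0 i j) (hz i j)
    calc ∑ i, ∑ j, w i j * (Real.log (q j) - Real.log (p i))
        ≤ ∑ i, ∑ j, ((q j * t i j - w i j) - w i j * Real.log (t i j)) := by
          refine Finset.sum_le_sum fun i _ => Finset.sum_le_sum fun j _ => this i j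
      _ = (∑ i, ∑ j, (q j * t i j - w i j)) - ∑ i, ∑ j, w i j * Real.log (t i j) := by
          rw [← Finset.sum_sub_distrib]
          refine Finset.sum_congr rfl fun i _ => ?_
          rw [← Finset.sum_sub_distrib]
  -- the q*t sum equals 1
  have htsum : ∀ j, ∑ i, t i j = 1 := by
    intro j
    have : ∀ i, t i j = T / ((d:ℝ) - 1) +
        (if i = j then (1 - T) - T / ((d:ℝ) - 1) else 0) := by
      intro i
      by_cases h : i = j <;> simp [htdef, h]
    rw [Finset.sum_congr rfl fun i _ => this i, Finset.sum_add_distrib,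
      Finset.sum_ite_eq', Finset.sum_const, Finset.card_univ, Fintype.card_fin]
    simp only [Finset.mem_univ, if_true, nsmul_eq_mul]
    field_simp
    ring
  have hqt : ∑ i, ∑ j, q j * t i j = 1 := by
    rw [Finset.sum_comm]
    have : ∀ j, ∑ i, q j * t i j = q j := by
      intro j
      rw [← Finset.mul_sum, htsum j, mul_one]
    rw [Finset.sum_congr rfl fun j _ => this j, hq1]
  have hww : ∑ i, ∑ j, w i j = 1 := by
    rw [Finset.sum_congr rfl fun i _ => hrow i, hp1]
  -- the w log t sum
  have hlogt : ∑ i, ∑ j, w i j * Real.log (t i j) =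
      (1 - T) * Real.log (1 - T) + T * Real.log (T / ((d:ℝ) - 1)) := by
    have hpt : ∀ i j, w i j * Real.log (t i j) =
        w i j * Real.log (T / ((d:ℝ) - 1)) +
        (if i = j then w i j * (Real.log (1 - T) - Real.log (T / ((d:ℝ) - 1))) else 0) := by
      intro i j
      by_cases h : i = j <;> simp [htdef, h] <;> ring
    have h1 : ∀ i, ∑ j, w i j * Real.log (t i j) =
        p i * Real.log (T / ((d:ℝ) - 1)) +
        w i i * (Real.log (1 - T) - Real.log (T / ((d:ℝ) - 1))) := by
      intro i
      rw [Finset.sum_congr rfl fun j _ => hpt i j, Finset.sum_add_distrib,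
        ← Finset.sum_mul, hrow i, Finset.sum_ite_eq]
      simp only [Finset.mem_univ, if_true]
    rw [Finset.sum_congr rfl fun i _ => h1 i, Finset.sum_add_distrib,
      ← Finset.sum_mul, hp1, ← Finset.sum_mul, hdiagsum]
    ring
  have hTd : T * Real.log (T / ((d:ℝ) - 1)) =
      T * Real.log T - T * Real.log ((d:ℝ) - 1) := by
    rw [Real.log_div hTpos.ne' hd1.ne']
    ring
  -- put it together
  have hqtw : ∑ i, ∑ j, (q j * t i j - w i j) = 0 := by
    have : ∑ i, ∑ j, (q j * t i j - w i j) =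
        (∑ i, ∑ j, q j * t i j) - ∑ i, ∑ j, w i j := by
      rw [← Finset.sum_sub_distrib]
      refine Finset.sum_congr rfl fun i _ => ?_
      rw [← Finset.sum_sub_distrib]
    rw [this, hqt, hww]; ring
  rw [hA]
  calc ∑ i, ∑ j, w i j * (Real.log (q j) - Real.log (p i))
      ≤ (∑ i, ∑ j, (q j * t i j - w i j)) - ∑ i, ∑ j, w i j * Real.log (t i j) := hstep
    _ = T * Real.log ((d:ℝ) - 1) - T * Real.log T - (1 - T) * Real.log (1 - T) := by
        rw [hqtw, hlogt, hTd]; ring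

/-- Sharp Fannes-type inequality for Shannon entropies of probability vectors. -/
theorem sharp_fannes_classical (d : ℕ) (hd : 2 ≤ d)
    (p q : Fin d → ℝ) (hp0 : ∀ i, 0 ≤ p i) (hq0 : ∀ i, 0 ≤ q i)
    (hp1 : ∑ i, p i = 1) (hq1 : ∑ i, q i = 1)
    (T : ℝ) (hT : T = (∑ i, |p i - q i|) / 2) :
    |(∑ i, Hbit (p i)) - ∑ i, Hbit (q i)| ≤
      T * Real.logb 2 (d - 1) - T * Real.logb 2 T - (1 - T) * Real.logb 2 (1 - T) := by
  have hL : (0:ℝ) < Real.log 2 := Real.log_pos (by norm_num)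
  set L := Real.log 2 with hLdef
  have hsum : ∀ (f : Fin d → ℝ), ∑ i, Hbit (f i) = (-∑ i, f i * Real.log (f i)) / L := by
    intro f
    have h1 : ∀ i, Hbit (f i) = -(f i * Real.log (f i)) / L := by
      intro i
      simp only [Hbit, Real.logb, hLdef]
      ring
    rw [Finset.sum_congr rfl fun i _ => h1 i, ← Finset.sum_div, ← Finset.sum_neg_distrib]
  have hlogb : ∀ x : ℝ, Real.logb 2 x = Real.log x / L := fun x => rfl
  have key1 := key_ineq d hd p q hp0 hq0 hp1 hq1 T hT
  have key2 := key_ineq d hd q p hq0 hp0 hq1 hp1 T (by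
    rw [hT]
    congr 1
    exact Finset.sum_congr rfl fun i _ => (abs_sub_comm (q i) (p i)).symm)
  rw [hsum p, hsum q, hlogb, hlogb, hlogb]
  rw [div_sub_div_same, abs_div, abs_of_pos hL]
  have hrhs : T * (Real.log ((d:ℝ) - 1) / L) - T * (Real.log T / L) -
      (1 - T) * (Real.log (1 - T) / L) =
      (T * Real.log ((d:ℝ) - 1) - T * Real.log T - (1 - T) * Real.log (1 - T)) / L := by
    ring
  rw [hrhs]
  refine div_le_div_of_nonneg_right ?_ hL.le
  rw [abs_sub_le_iff]
  constructor
  · linarith [key1]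
  · linarith [key2]
end

section
/- The d-dimensional quantum states ρ = Diag(1−T, T/(d−1), …, T/(d−1)) and σ = |0⟩⟨0| (for 0 ≤ T ≤ 1, d ≥ 2) have trace norm distance ‖ρ − σ‖₁/2 = T and entropy difference S(ρ) − S(σ) = T·log₂(d−1) + H((T,1−T)). -/
@[simp] theorem Hbit_zero : Hbit 0 = 0 := by simp [Hbit]
@[simp] theorem Hbit_one : Hbit 1 = 0 := by simp [Hbit]

theorem mul_Hbit_div (x : ℝ) {y : ℝ} (hy : y ≠ 0) :
    y * Hbit (x / y) = x * Real.logb 2 y + Hbit x := by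
  rcases eq_or_ne x 0 with rfl | hx
  · simp
  · rw [Hbit, Hbit, Real.logb_div hx hy]
    field_simp
    ring

theorem Fin.sum_ite_val_eq_zero {M : Type*} [AddCommMonoid M] (n : ℕ) (a b : M) :
    ∑ i : Fin (n + 1), (if (i : ℕ) = 0 then a else b) = a + n • b := by
  simp [Fin.sum_univ_succ]

theorem diagonal_pair_attains_bound_general (d : ℕ) (hd : 2 ≤ d)
    (T : ℝ) (hT0 : 0 ≤ T)
    (v w : Fin d → ℝ)
    (hv : v = fun i : Fin d => if (i : ℕ) = 0 then 1 - T else T / ((d : ℝ) - 1))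
    (hw : w = fun i : Fin d => if (i : ℕ) = 0 then 1 else (0 : ℝ)) :
    (∑ i, |v i - w i|) / 2 = T ∧
    (∑ i, Hbit (v i)) - (∑ i, Hbit (w i)) =
      T * Real.logb 2 ((d : ℝ) - 1)
        + (-(T * Real.logb 2 T) - (1 - T) * Real.logb 2 (1 - T)) := by
  obtain ⟨n, rfl⟩ : ∃ n, d = n + 1 := ⟨d - 1, by omega⟩
  have hn : (n : ℝ) ≠ 0 := by norm_cast; omega
  subst hv hw
  simp only [Nat.cast_succ, add_sub_cancel_right, apply_ite₂ (fun a b : ℝ => |a - b|),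
    apply_ite Hbit, Fin.sum_ite_val_eq_zero, nsmul_eq_mul, mul_Hbit_div T hn]
  constructor
  · rw [sub_sub_cancel_left, abs_neg, sub_zero, abs_of_nonneg hT0,
      abs_of_nonneg (by positivity), mul_div_cancel₀ T hn]
    ring
  · rw [Hbit_one, Hbit_zero, mul_zero, add_zero, sub_zero, Hbit, Hbit]
    ring

/-- For the diagonal states `ρ = Diag(1-T, T/(d-1), …, T/(d-1))` and
`σ = Diag(1, 0, …, 0)`, the trace norm distance (half the sum of absolute values
of the eigenvalues of `ρ - σ`, i.e. of the diagonal entries) equals `T`, and the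
entropy difference `S(ρ) - S(σ)` (entropies computed from the diagonal
eigenvalues) equals `T log₂(d-1) + H((T, 1-T))`. -/
theorem diagonal_pair_attains_bound (d : ℕ) (hd : 2 ≤ d)
    (T : ℝ) (hT0 : 0 ≤ T) (hT1 : T ≤ 1)
    (v w : Fin d → ℝ)
    (hv : v = fun i : Fin d => if (i : ℕ) = 0 then 1 - T else T / ((d : ℝ) - 1))
    (hw : w = fun i : Fin d => if (i : ℕ) = 0 then 1 else (0 : ℝ))
    (ρ σ : Matrix (Fin d) (Fin d) ℂ)
    (hρ : ρ = Matrix.diagonal fun i => (v i : ℂ))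
    (hσ : σ = Matrix.diagonal fun i => (w i : ℂ)) :
    (∑ i, |v i - w i|) / 2 = T ∧
    (∑ i, Hbit (v i)) - (∑ i, Hbit (w i)) =
      T * Real.logb 2 ((d : ℝ) - 1)
        + (-(T * Real.logb 2 T) - (1 - T) * Real.logb 2 (1 - T)) :=
  diagonal_pair_attains_bound_general d hd T hT0 v w hv hw
end

section
/- For two 2-dimensional probability vectors p = (p₁, 1−p₁) and q = (q₁, 1−q₁) with T = |p₁ − q₁|, the binary entropies satisfy |H(p) − H(q)| ≤ −T log₂ T − (1−T) log₂(1−T). -/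
/-- Binary Shannon entropy `H((x, 1-x))`. -/
noncomputable def binEnt (x : ℝ) : ℝ := Hbit x + Hbit (1 - x)

/-!
A concave function `f` with `f 0 ≥ 0` is subadditive on `[0, ∞)`: each of `a`, `b` lies on the
chord from `0` to `a + b`. Applied to the binary entropy `h`, which is concave on `[0, 1]`, and
using `h (1 - x) = h x`, this gives for `p ≤ q` both `h q ≤ h p + h (q - p)` and
`h (1 - p) ≤ h (1 - q) + h (q - p)`, i.e. `|h p - h q| ≤ h (q - p)`.
-/

open Real Set

theorem ConcaveOn.map_add_le {s : Set ℝ} {f : ℝ → ℝ} (hf : ConcaveOn ℝ s f) (h0 : (0 : ℝ) ∈ s)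
    (hf0 : 0 ≤ f 0) {a b : ℝ} (ha : 0 ≤ a) (hb : 0 ≤ b) (hab : a + b ∈ s) :
    f (a + b) ≤ f a + f b := by
  rcases (add_nonneg ha hb).eq_or_lt with hzero | hpos
  · obtain ⟨rfl, rfl⟩ : a = 0 ∧ b = 0 := ⟨by linarith, by linarith⟩
    simpa using hf0
  have chord {x y : ℝ} (hx : 0 ≤ x) (hy : 0 ≤ y) (hxy : x + y = a + b) :
      x / (a + b) * f (a + b) ≤ f x := by
    have h := hf.2 h0 hab (div_nonneg hy hpos.le) (div_nonneg hx hpos.le)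
      (by field_simp; linarith)
    have hx' : x / (a + b) * (a + b) = x := by field_simp
    simp only [smul_eq_mul, mul_zero, zero_add, hx'] at h
    nlinarith [div_nonneg hy hpos.le]
  have hsum : a / (a + b) * f (a + b) + b / (a + b) * f (a + b) = f (a + b) := by
    field_simp
  linarith [chord ha hb rfl, chord hb ha (add_comm b a)]

theorem binEntropy_add_le {a b : ℝ} (ha : 0 ≤ a) (hb : 0 ≤ b) (hab : a + b ≤ 1) :
    binEntropy (a + b) ≤ binEntropy a + binEntropy b :=
  strictConcave_binEntropy.concaveOn.map_add_le ⟨le_rfl, zero_le_one⟩ binEntropy_zero.ge ha hb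
    ⟨add_nonneg ha hb, hab⟩

theorem abs_binEntropy_sub_le_of_le {p q : ℝ} (hp : 0 ≤ p) (hq : q ≤ 1) (hpq : p ≤ q) :
    |binEntropy p - binEntropy q| ≤ binEntropy (q - p) := by
  have hqp : 0 ≤ q - p := sub_nonneg.mpr hpq
  have hle_q := binEntropy_add_le hp hqp (by linarith)
  have hle_p := binEntropy_add_le (sub_nonneg.mpr hq) hqp (by linarith)
  rw [add_sub_cancel] at hle_q
  rw [show 1 - q + (q - p) = 1 - p by ring, binEntropy_one_sub, binEntropy_one_sub] at hle_p
  exact abs_sub_le_iff.mpr ⟨by linarith, by linarith⟩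

theorem abs_binEntropy_sub_le {p q : ℝ} (hp : p ∈ Icc (0 : ℝ) 1) (hq : q ∈ Icc (0 : ℝ) 1) :
    |binEntropy p - binEntropy q| ≤ binEntropy |p - q| := by
  rcases le_total p q with hpq | hqp
  · rw [abs_sub_comm p q, abs_of_nonneg (sub_nonneg.mpr hpq)]
    exact abs_binEntropy_sub_le_of_le hp.1 hq.2 hpq
  · rw [abs_sub_comm, abs_of_nonneg (sub_nonneg.mpr hqp)]
    exact abs_binEntropy_sub_le_of_le hq.1 hp.2 hqp

theorem binEnt_eq_binEntropy_div_log_two (x : ℝ) : binEnt x = binEntropy x / log 2 := by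
  simp only [binEnt, Hbit, binEntropy, logb, log_inv]
  ring

/-- The `d = 2` case of the sharp Fannes inequality. -/
theorem sharp_fannes_qubit (p₁ q₁ : ℝ) (hp0 : 0 ≤ p₁) (hp1 : p₁ ≤ 1)
    (hq0 : 0 ≤ q₁) (hq1 : q₁ ≤ 1) (T : ℝ) (hT : T = |p₁ - q₁|) :
    |binEnt p₁ - binEnt q₁| ≤ -(T * Real.logb 2 T) - (1 - T) * Real.logb 2 (1 - T) := by
  have hrhs : -(T * logb 2 T) - (1 - T) * logb 2 (1 - T) = binEnt T := by
    simp only [binEnt, Hbit]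
    ring
  rw [hrhs, hT]
  simp only [binEnt_eq_binEntropy_div_log_two, ← sub_div, abs_div,
    abs_of_pos (log_pos one_lt_two)]
  gcongr
  exact abs_binEntropy_sub_le ⟨hp0, hp1⟩ ⟨hq0, hq1⟩
end

section
/- Let A, B be Hermitian d×d matrices and let Eig↓(M) denote the vector of eigenvalues of M sorted in non-increasing order, Eig↑(M) sorted in non-decreasing order. Then ‖Diag(Eig↓(A)) − Diag(Eig↓(B))‖₁ ≤ ‖A − B‖₁ ≤ ‖Diag(Eig↓(A)) − Diag(Eig↑(B))‖₁. -/
/-- The trace norm of a Hermitian matrix: the sum of the absolute values of its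
eigenvalues (which are its singular values). -/
noncomputable def traceNormH {d : ℕ} {A : Matrix (Fin d) (Fin d) ℂ}
    (hA : A.IsHermitian) : ℝ := ∑ i, |hA.eigenvalues i|

/-!
Let `μ` be the eigenvalues of `D = A - B`, with orthonormal eigenvectors `u j`.

Upper bound: if `P` projects onto the span of the `k` vectors `u j` with `μ j ≥ 0`, then
`‖D‖₁ = 2 tr (D P) - tr D`. By Ky Fan's maximum principle, `tr (A P)` is at most the sum of
the `k` largest eigenvalues of `A` and `tr (B P)` at least the sum of the `k` smallest of `B`,
which bounds `‖D‖₁` by `∑ i < k, (α i - β' i) - ∑ i ≥ k, (α i - β' i)`.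

Lower bound: `C = A + D⁻ = B + D⁺` dominates `A` and `B`, so by Weyl's monotonicity principle
(a Courant–Fischer dimension count) its sorted eigenvalues satisfy `α ≤ γ` and `β ≤ γ`.
Hence `∑ |α i - β i| ≤ ∑ ((γ i - α i) + (γ i - β i)) = tr D⁻ + tr D⁺ = ‖D‖₁`.
-/

open Finset RCLike Matrix
open scoped InnerProductSpace

variable {𝕜 E ι κ : Type*} [RCLike 𝕜] [NormedAddCommGroup E] [InnerProductSpace 𝕜 E]
  [Fintype ι]

theorem Antitone.sum_mul_le_sum_filter_lt {d k : ℕ} {α c : Fin d → ℝ} (hα : Antitone α)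
    (hc₀ : 0 ≤ c) (hc₁ : c ≤ 1) (hc : ∑ i, c i = k) :
    ∑ i, α i * c i ≤ ∑ i with i.val < k, α i := by
  rcases d.eq_zero_or_pos with rfl | hd
  · simp
  have hkd : k ≤ d := by
    have : (k : ℝ) ≤ d := by simpa [hc] using sum_le_sum fun i (_ : i ∈ univ) => hc₁ i
    exact_mod_cast this
  -- `t` separates the `k` largest values of `α` from the others (for `k = 0`, `k - 1 = 0`)
  set t := α ⟨k - 1, by omega⟩
  have key : ∀ i : Fin d, (α i - t) * c i ≤ if i.val < k then α i - t else 0 := fun i => by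
    split_ifs
    · exact mul_le_of_le_one_right (sub_nonneg.mpr (hα (Fin.le_def.mpr (by simp; omega))))
        (hc₁ i)
    · exact mul_nonpos_of_nonpos_of_nonneg
        (sub_nonpos.mpr (hα (Fin.le_def.mpr (by simp; omega)))) (hc₀ i)
  have hcard : #{i : Fin d | i.val < k} = k := by rw [Fin.card_filter_val_lt]; omega
  calc ∑ i, α i * c i = ∑ i, (α i - t) * c i + t * k := by
        simp [sub_mul, sum_sub_distrib, ← mul_sum, hc]
    _ ≤ ∑ i, (if i.val < k then α i - t else 0) + t * k := by
        gcongr with i; exact key i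
    _ = ∑ i with i.val < k, α i := by
        rw [← sum_filter, sum_sub_distrib, sum_const, hcard]; simp [mul_comm]

theorem sum_abs_eq_two_mul_sum_filter_nonneg_sub_sum (x : ι → ℝ) :
    ∑ i, |x i| = 2 * ∑ i with 0 ≤ x i, x i - ∑ i, x i := by
  rw [sum_filter, mul_sum, ← sum_sub_distrib]
  refine sum_congr rfl fun i _ => ?_
  split_ifs with h
  · rw [abs_of_nonneg h]; ring
  · rw [abs_of_neg (not_le.mp h)]; ring

theorem two_mul_sum_filter_sub_sum_le_sum_abs (p : ι → Prop) [DecidablePred p] (x : ι → ℝ) :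
    2 * ∑ i with p i, x i - ∑ i, x i ≤ ∑ i, |x i| := by
  rw [sum_filter, mul_sum, ← sum_sub_distrib]
  refine sum_le_sum fun i _ => ?_
  split_ifs
  · linarith [le_abs_self (x i)]
  · linarith [neg_abs_le (x i)]

theorem OrthonormalBasis.finrank_span_image (b : OrthonormalBasis ι 𝕜 E) (s : Finset ι) :
    Module.finrank 𝕜 (Submodule.span 𝕜 (b '' s)) = s.card := by
  rw [Set.image_eq_range, finrank_span_eq_card]
  · simp
  · exact b.orthonormal.linearIndependent.comp _ Subtype.val_injective

def IsEigenbasis (T : E →ₗ[𝕜] E) (b : OrthonormalBasis ι 𝕜 E) (μ : ι → ℝ) : Prop :=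
  ∀ i, T (b i) = (μ i : 𝕜) • b i

namespace IsEigenbasis

section

variable {T S : E →ₗ[𝕜] E} {b : OrthonormalBasis ι 𝕜 E} {μ ν : ι → ℝ}

theorem neg (h : IsEigenbasis T b μ) : IsEigenbasis (-T) b (-μ) := fun i => by
  simp [h i]

theorem add (hT : IsEigenbasis T b μ) (hS : IsEigenbasis S b ν) :
    IsEigenbasis (T + S) b (μ + ν) := fun i => by
  simp [hT i, hS i, add_smul]

theorem reindex {ι' : Type*} [Fintype ι'] (h : IsEigenbasis T b μ) (e : ι ≃ ι') :
    IsEigenbasis T (b.reindex e) (μ ∘ e.symm) := fun i => by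
  simp [h _]

theorem re_inner_apply_self (h : IsEigenbasis T b μ) (v : E) :
    re ⟪v, T v⟫_𝕜 = ∑ i, μ i * ‖⟪b i, v⟫_𝕜‖ ^ 2 := by
  have hTv : T v = ∑ i, (μ i * ⟪b i, v⟫_𝕜) • b i := by
    conv_lhs => rw [← b.sum_repr' v]
    simp [h _, smul_smul, mul_comm]
  rw [hTv, inner_sum, map_sum]
  refine sum_congr rfl fun i _ => ?_
  rw [inner_smul_right, ← inner_conj_symm v (b i), mul_assoc, mul_conj, ← ofReal_pow,
    ← ofReal_mul, ofReal_re]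

theorem re_inner_apply_basis (h : IsEigenbasis T b μ) (i : ι) :
    re ⟪b i, T (b i)⟫_𝕜 = μ i := by
  simp [h i, inner_smul_right]

theorem re_inner_apply_self_nonneg (h : IsEigenbasis T b μ) (hμ : 0 ≤ μ) (v : E) :
    0 ≤ re ⟪v, T v⟫_𝕜 := by
  rw [h.re_inner_apply_self]
  exact sum_nonneg fun i _ => mul_nonneg (hμ i) (sq_nonneg _)

theorem sum_re_inner_apply [Fintype κ] (h : IsEigenbasis T b μ) (w : OrthonormalBasis κ 𝕜 E) :
    ∑ j, re ⟪w j, T (w j)⟫_𝕜 = ∑ i, μ i := by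
  simp_rw [h.re_inner_apply_self]
  rw [sum_comm]
  refine sum_congr rfl fun i _ => ?_
  rw [← mul_sum, w.sum_sq_norm_inner_left, b.orthonormal.1 i, one_pow, mul_one]

theorem sum_sub_sum_eq_of_sub [Fintype κ] {b' : OrthonormalBasis ι 𝕜 E}
    {u : OrthonormalBasis κ 𝕜 E} {p : κ → ℝ} (hT : IsEigenbasis T b μ)
    (hS : IsEigenbasis S b' ν) (hST : IsEigenbasis (S - T) u p) :
    ∑ i, ν i - ∑ i, μ i = ∑ j, p j := by
  rw [← hST.sum_re_inner_apply b', ← hS.sum_re_inner_apply b', ← hT.sum_re_inner_apply b',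
    ← sum_sub_distrib]
  simp [inner_sub_right]

theorem mul_norm_sq_le_re_inner_of_mem_span (h : IsEigenbasis T b μ) {s : Set ι} {c : ℝ}
    (hc : ∀ i ∈ s, c ≤ μ i) {v : E} (hv : v ∈ Submodule.span 𝕜 (b '' s)) :
    c * ‖v‖ ^ 2 ≤ re ⟪v, T v⟫_𝕜 := by
  have hvanish : ∀ i ∉ s, ⟪b i, v⟫_𝕜 = 0 := fun i hi => by
    rw [← OrthonormalBasis.coe_toBasis, Module.Basis.mem_span_image] at hv
    have := Finsupp.notMem_support_iff.mp fun hmem => hi (hv hmem)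
    rwa [OrthonormalBasis.coe_toBasis_repr_apply, b.repr_apply_apply] at this
  rw [h.re_inner_apply_self, ← b.sum_sq_norm_inner_right, mul_sum]
  refine sum_le_sum fun i _ => ?_
  by_cases hi : i ∈ s
  · exact mul_le_mul_of_nonneg_right (hc i hi) (sq_nonneg _)
  · simp [hvanish i hi]

end

section

variable {d : ℕ} {T S : E →ₗ[𝕜] E} {b b' : OrthonormalBasis (Fin d) 𝕜 E} {μ ν : Fin d → ℝ}

theorem le_of_forall_re_inner_le (hT : IsEigenbasis T b μ) (hS : IsEigenbasis S b' ν)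
    (hμ : Antitone μ) (hν : Antitone ν) (hTS : ∀ v, re ⟪v, T v⟫_𝕜 ≤ re ⟪v, S v⟫_𝕜) :
    μ ≤ ν := by
  intro k
  have := b.toBasis.finiteDimensional_of_finite
  set V := Submodule.span 𝕜 (b '' (Iic k : Finset (Fin d)))
  set W := Submodule.span 𝕜 (b' '' (Ici k : Finset (Fin d)))
  have hVW : ¬ Disjoint V W := fun hVW => by
    have := Submodule.finrank_add_finrank_le_of_disjoint hVW
    rw [b.finrank_span_image, b'.finrank_span_image,
      Module.finrank_eq_card_basis b.toBasis] at this
    simp at this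
    omega
  obtain ⟨v, hvV, hvW, hv⟩ : ∃ v ∈ V, v ∈ W ∧ v ≠ 0 := by
    simpa [Submodule.disjoint_def] using hVW
  have hlow := hT.mul_norm_sq_le_re_inner_of_mem_span (c := μ k)
    (fun i hi => hμ (by simpa using hi)) hvV
  have hup := hS.neg.mul_norm_sq_le_re_inner_of_mem_span (c := -ν k)
    (fun i hi => neg_le_neg (hν (by simpa using hi))) hvW
  simp only [LinearMap.neg_apply, inner_neg_right, map_neg, neg_mul, neg_le_neg_iff] at hup
  exact le_of_mul_le_mul_right ((hlow.trans (hTS v)).trans hup) (by positivity)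

theorem le_of_sub_eigenvalues_nonneg [Fintype κ] {u : OrthonormalBasis κ 𝕜 E} {p : κ → ℝ}
    (hT : IsEigenbasis T b μ) (hS : IsEigenbasis S b' ν) (hμ : Antitone μ) (hν : Antitone ν)
    (hST : IsEigenbasis (S - T) u p) (hp : 0 ≤ p) : μ ≤ ν :=
  hT.le_of_forall_re_inner_le hS hμ hν fun v => by
    simpa [inner_sub_right] using hST.re_inner_apply_self_nonneg hp v

theorem sum_re_inner_le (h : IsEigenbasis T b μ) (hμ : Antitone μ) {w : κ → E}
    (hw : Orthonormal 𝕜 w) (s : Finset κ) :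
    ∑ j ∈ s, re ⟪w j, T (w j)⟫_𝕜 ≤ ∑ i with i.val < #s, μ i := by
  set c : Fin d → ℝ := fun i => ∑ j ∈ s, ‖⟪w j, b i⟫_𝕜‖ ^ 2
  have hc : ∑ j ∈ s, re ⟪w j, T (w j)⟫_𝕜 = ∑ i, μ i * c i := by
    simp_rw [h.re_inner_apply_self, c, mul_sum, norm_inner_symm (b _)]
    exact sum_comm
  rw [hc]
  refine hμ.sum_mul_le_sum_filter_lt (fun i => by positivity) (fun i => ?_) ?_
  · simpa [b.orthonormal.1 i] using hw.sum_inner_products_le (b i)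
  · simp only [c]
    rw [sum_comm]
    simp [b.sum_sq_norm_inner_left, hw.1]

theorem sum_filter_le_sum_re_inner (h : IsEigenbasis T b μ) (hμ : Monotone μ) {w : κ → E}
    (hw : Orthonormal 𝕜 w) (s : Finset κ) :
    ∑ i with i.val < #s, μ i ≤ ∑ j ∈ s, re ⟪w j, T (w j)⟫_𝕜 := by
  simpa [sum_neg_distrib] using h.neg.sum_re_inner_le hμ.neg hw s

end

variable {d : ℕ} [Fintype κ] {A B C : E →ₗ[𝕜] E} {a b c : OrthonormalBasis (Fin d) 𝕜 E}
  {u : OrthonormalBasis κ 𝕜 E} {α β γ : Fin d → ℝ}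

theorem sum_abs_le_sum_abs_sub {μ : κ → ℝ} (hA : IsEigenbasis A a α)
    (hB : IsEigenbasis B b β) (hD : IsEigenbasis (A - B) u μ) (hα : Antitone α)
    (hβ : Monotone β) :
    ∑ j, |μ j| ≤ ∑ i, |α i - β i| := by
  classical
  set s : Finset κ := {j | 0 ≤ μ j}
  have hμ : ∀ j, μ j = re ⟪u j, A (u j)⟫_𝕜 - re ⟪u j, B (u j)⟫_𝕜 := fun j => by
    rw [← hD.re_inner_apply_basis j]
    simp [inner_sub_right]
  have htop : ∑ j ∈ s, μ j ≤ ∑ i with i.val < #s, (α i - β i) := by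
    simp_rw [hμ, sum_sub_distrib]
    exact sub_le_sub (hA.sum_re_inner_le hα u.orthonormal s)
      (hB.sum_filter_le_sum_re_inner hβ u.orthonormal s)
  have htrace : ∑ j, μ j = ∑ i, (α i - β i) := by
    simp_rw [hμ, sum_sub_distrib, hA.sum_re_inner_apply u, hB.sum_re_inner_apply u]
  calc ∑ j, |μ j| = 2 * ∑ j ∈ s, μ j - ∑ j, μ j :=
        sum_abs_eq_two_mul_sum_filter_nonneg_sub_sum μ
    _ ≤ 2 * ∑ i with i.val < #s, (α i - β i) - ∑ i, (α i - β i) := by rw [htrace]; linarith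
    _ ≤ ∑ i, |α i - β i| := two_mul_sum_filter_sub_sum_le_sum_abs _ _

theorem sum_abs_sub_le {p q : κ → ℝ} (hA : IsEigenbasis A a α) (hB : IsEigenbasis B b β)
    (hC : IsEigenbasis C c γ) (hα : Antitone α) (hβ : Antitone β) (hγ : Antitone γ)
    (hCA : IsEigenbasis (C - A) u p) (hCB : IsEigenbasis (C - B) u q) (hp : 0 ≤ p)
    (hq : 0 ≤ q) :
    ∑ i, |α i - β i| ≤ ∑ j, p j + ∑ j, q j := by
  have hαγ := hA.le_of_sub_eigenvalues_nonneg hC hα hγ hCA hp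
  have hβγ := hB.le_of_sub_eigenvalues_nonneg hC hβ hγ hCB hq
  rw [← hA.sum_sub_sum_eq_of_sub hC hCA, ← hB.sum_sub_sum_eq_of_sub hC hCB, ← sum_sub_distrib,
    ← sum_sub_distrib, ← sum_add_distrib]
  exact sum_le_sum fun i _ => abs_sub_le_iff.mpr
    ⟨by linarith [hαγ i, hβγ i], by linarith [hαγ i, hβγ i]⟩

end IsEigenbasis

theorem LinearMap.IsSymmetric.isEigenbasis [FiniteDimensional 𝕜 E] {T : E →ₗ[𝕜] E} {d : ℕ}
    (hT : T.IsSymmetric) (hn : Module.finrank 𝕜 E = d) :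
    IsEigenbasis T (hT.eigenvectorBasis hn) (hT.eigenvalues hn) :=
  hT.apply_eigenvectorBasis hn

namespace Matrix.IsHermitian

section

variable [DecidableEq ι] {A : Matrix ι ι 𝕜}

theorem isEigenbasis_cfc (hA : A.IsHermitian) (f : ℝ → ℝ) :
    IsEigenbasis (toEuclideanLin (cfc f A)) hA.eigenvectorBasis (f ∘ hA.eigenvalues) :=
  fun i => by
    rw [hA.cfc_eq, IsHermitian.cfc, Unitary.conjStarAlgAut_apply, toLpLin_apply]
    ext j
    simp [← mulVec_mulVec, star_eigenvectorUnitary_mulVec, real_smul_eq_coe_mul, mul_comm]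

theorem isEigenbasis (hA : A.IsHermitian) :
    IsEigenbasis (toEuclideanLin A) hA.eigenvectorBasis hA.eigenvalues := by
  simpa [cfc_id ℝ A hA.isSelfAdjoint] using hA.isEigenbasis_cfc id

end

theorem sum_abs_sub_le_traceNormH {d : ℕ} {A B : Matrix (Fin d) (Fin d) ℂ}
    (hA : A.IsHermitian) (hB : B.IsHermitian)
    {a b : OrthonormalBasis (Fin d) ℂ (EuclideanSpace ℂ (Fin d))} {α β : Fin d → ℝ}
    (ha : IsEigenbasis (toEuclideanLin A) a α) (hb : IsEigenbasis (toEuclideanLin B) b β)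
    (hα : Antitone α) (hβ : Antitone β) :
    ∑ i, |α i - β i| ≤ traceNormH (hA.sub hB) := by
  set hD := hA.sub hB
  set μ := hD.eigenvalues
  set N := cfc (fun x : ℝ => max (-x) 0) (A - B)
  have hC := isSymmetric_toEuclideanLin_iff.mpr (hA.add (cfc_predicate _ _ : IsSelfAdjoint N))
  have hn : Module.finrank ℂ (EuclideanSpace ℂ (Fin d)) = d := finrank_euclideanSpace_fin
  have hN := hD.isEigenbasis_cfc fun x => max (-x) 0
  have hCA : IsEigenbasis (toEuclideanLin (A + N) - toEuclideanLin A) hD.eigenvectorBasis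
      fun j => max (-μ j) 0 := by
    rw [map_add, add_sub_cancel_left]
    exact hN
  have hCB : IsEigenbasis (toEuclideanLin (A + N) - toEuclideanLin B) hD.eigenvectorBasis
      (μ + fun j => max (-μ j) 0) := by
    rw [show toEuclideanLin (A + N) - toEuclideanLin B =
        toEuclideanLin (A - B) + toEuclideanLin N by simp only [map_add, map_sub]; abel]
    exact hD.isEigenbasis.add hN
  calc ∑ i, |α i - β i| ≤ ∑ j, max (-μ j) 0 + ∑ j, (μ j + max (-μ j) 0) :=
        ha.sum_abs_sub_le hb (hC.isEigenbasis hn) hα hβ (hC.eigenvalues_antitone hn) hCA hCB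
          (fun j => le_max_right _ _)
          fun j => show 0 ≤ μ j + _ by linarith [le_max_left (-μ j) 0]
    _ = traceNormH hD := by
        rw [traceNormH, ← sum_add_distrib]
        refine sum_congr rfl fun j _ => ?_
        rcases le_total 0 (μ j) with h | h
        · rw [abs_of_nonneg h, max_eq_right (by linarith)]; ring
        · rw [abs_of_nonpos h, max_eq_left (by linarith)]; ring

end Matrix.IsHermitian

/-- Mirsky's inequality for the trace norm: if `α`, `β` are the eigenvalues of
Hermitian matrices `A`, `B` sorted in non-increasing order and `β'` those of `B`
sorted in non-decreasing order, then
`‖Diag α - Diag β‖₁ ≤ ‖A - B‖₁ ≤ ‖Diag α - Diag β'‖₁`.  (The trace norm of the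
real diagonal matrix `Diag α - Diag β` is `∑ i, |α i - β i|`.) -/
theorem mirsky_trace_norm (d : ℕ) (A B : Matrix (Fin d) (Fin d) ℂ)
    (hA : A.IsHermitian) (hB : B.IsHermitian)
    (α β β' : Fin d → ℝ)
    (hα : Antitone α) (hβ : Antitone β) (hβ' : Monotone β')
    (hαA : ∃ e : Equiv.Perm (Fin d), α = hA.eigenvalues ∘ e)
    (hβB : ∃ e : Equiv.Perm (Fin d), β = hB.eigenvalues ∘ e)
    (hβ'B : ∃ e : Equiv.Perm (Fin d), β' = hB.eigenvalues ∘ e) :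
    (∑ i, |α i - β i|) ≤ traceNormH (hA.sub hB) ∧
      traceNormH (hA.sub hB) ≤ ∑ i, |α i - β' i| := by
  obtain ⟨eA, rfl⟩ := hαA
  obtain ⟨eB, rfl⟩ := hβB
  obtain ⟨eB', rfl⟩ := hβ'B
  have ha := hA.isEigenbasis.reindex eA.symm
  have hD := (hA.sub hB).isEigenbasis
  rw [map_sub] at hD
  exact ⟨hA.sum_abs_sub_le_traceNormH hB ha (hB.isEigenbasis.reindex eB.symm) hα hβ,
    ha.sum_abs_le_sum_abs_sub (hB.isEigenbasis.reindex eB'.symm) hD hα hβ'⟩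
end

section
/- The function f(T) = T·log₂(d−1) − T log₂ T − (1−T) log₂(1−T), for fixed integer d ≥ 2 and T ∈ [0, 1/(2e)], satisfies f(T) ≤ 2T·log₂(d) − 2T·log₂(2T); i.e., the sharp bound is at most the original Fannes bound on its range of validity. -/
/-- On `[0, 1/(2e)]`, the sharp bound is at most the original Fannes bound. -/
theorem sharp_le_fannes (d : ℕ) (hd : 2 ≤ d) (T : ℝ) (hT0 : 0 ≤ T)
    (hT1 : T ≤ 1 / (2 * Real.exp 1)) :
    T * Real.logb 2 ((d : ℝ) - 1) - T * Real.logb 2 T - (1 - T) * Real.logb 2 (1 - T) ≤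
      2 * T * Real.logb 2 d - 2 * T * Real.logb 2 (2 * T) := by
  rcases hT0.eq_or_lt with h | h
  · subst h
    simp
  -- T > 0 case
  have he : (1:ℝ) < Real.exp 1 := by
    have := Real.add_one_le_exp (1:ℝ); linarith
  have hTlt : T < 1 := by
    have h2e : (2:ℝ) < 2 * Real.exp 1 := by linarith
    have : 1 / (2 * Real.exp 1) < 1 / 2 := by
      apply div_lt_div_of_pos_left <;> linarith
    linarith
  have h1T : 0 < 1 - T := by linarith
  have hL : (0:ℝ) < Real.log 2 := Real.log_pos one_lt_two
  have h2T0 : 0 < 2 * T := by linarith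
  -- log (2T) ≤ -1
  have h2T : Real.log (2 * T) ≤ -1 := by
    have hle : 2 * T ≤ Real.exp (-1) := by
      rw [Real.exp_neg]
      calc 2 * T ≤ 2 * (1 / (2 * Real.exp 1)) := by linarith
        _ = (Real.exp 1)⁻¹ := by field_simp
    calc Real.log (2 * T) ≤ Real.log (Real.exp (-1)) := Real.log_le_log h2T0 hle
      _ = -1 := Real.log_exp _
  -- (1-T) log (1-T) ≥ -T
  have hfrac : -T ≤ (1 - T) * Real.log (1 - T) := by
    have hi : Real.log (1 - T)⁻¹ ≤ (1 - T)⁻¹ - 1 :=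
      Real.log_le_sub_one_of_pos (by positivity)
    rw [Real.log_inv] at hi
    have h2 := mul_le_mul_of_nonneg_left hi h1T.le
    have h3 : (1 - T) * (1 - T)⁻¹ = 1 := mul_inv_cancel₀ h1T.ne'
    nlinarith
  have hd1 : (1:ℝ) ≤ (d:ℝ) - 1 := by
    have : (2:ℝ) ≤ (d:ℝ) := by exact_mod_cast hd
    linarith
  have hlogd1 : Real.log ((d:ℝ) - 1) ≤ Real.log d :=
    Real.log_le_log (by linarith) (by linarith)
  have hlog2d : Real.log 2 ≤ Real.log d := by
    apply Real.log_le_log (by norm_num)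
    exact_mod_cast hd
  have hlog2T : T * Real.log (2 * T) = T * Real.log 2 + T * Real.log T := by
    rw [Real.log_mul (by norm_num) h.ne']; ring
  have key : T * Real.log ((d:ℝ) - 1) - T * Real.log T - (1 - T) * Real.log (1 - T) ≤
      2 * T * Real.log d - 2 * T * Real.log (2 * T) := by
    have a1 : T * Real.log (2 * T) ≤ T * (-1) := mul_le_mul_of_nonneg_left h2T h.le
    have a2 : T * Real.log ((d:ℝ) - 1) ≤ T * Real.log d :=
      mul_le_mul_of_nonneg_left hlogd1 h.le
    have a3 : T * Real.log 2 ≤ T * Real.log d := mul_le_mul_of_nonneg_left hlog2d h.le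
    linarith
  have e1 : T * Real.logb 2 ((d:ℝ) - 1) - T * Real.logb 2 T - (1 - T) * Real.logb 2 (1 - T)
      = (T * Real.log ((d:ℝ) - 1) - T * Real.log T - (1 - T) * Real.log (1 - T)) / Real.log 2 := by
    simp only [Real.logb]; ring
  have e2 : 2 * T * Real.logb 2 (d:ℝ) - 2 * T * Real.logb 2 (2 * T)
      = (2 * T * Real.log (d:ℝ) - 2 * T * Real.log (2 * T)) / Real.log 2 := by
    simp only [Real.logb]; ring
  rw [e1, e2, div_le_div_iff_of_pos_right hL]
  exact key
end
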